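/- arXiv:2505.03924 — 8 statements merged into one kernel-verified Lean document; each statement's English description precedes it below -/
import Mathlib

section
/- Let A be a finite-dimensional commutative local normed ℂ-algebra with maximal ideal 𝔪, let m ∈ 𝔪 be nonzero, and let k be the largest positive integer with m^k ≠ 0. Then in the projectivization ℙ(A) of the complex vector space A, the point [exp(t·m)] tends to [m^k] as the real parameter t tends to +∞. -/
open Filter

/-- The quotient topology on the projectivization of a topological vector space:
`ℙ K V` is the quotient of `V ∖ {0}` (with the subspace topology) by the rescaling action. -/
instance projectivizationTopology (K V : Type*) [DivisionRing K] [AddCommGroup V]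
    [Module K V] [TopologicalSpace V] : TopologicalSpace (Projectivization K V) :=
  inferInstanceAs (TopologicalSpace (Quotient (projectivizationSetoid K V)))

/-- The exponential of a nilpotent element `m` of a `ℂ`-algebra:
`exp m = ∑_{i ≥ 0} m^i / i!`, a finite sum since `m` is nilpotent. -/
noncomputable def nilExp {A : Type*} [CommRing A] [Algebra ℂ A] (m : A) : A :=
  ∑ i ∈ Finset.range (nilpotencyClass m), (i.factorial : ℂ)⁻¹ • m ^ i

/-- Let `A` be a finite-dimensional commutative local normed `ℂ`-algebra with maximal ideal
`𝔪`, let `m ∈ 𝔪` be nonzero and let `k` be the largest positive integer with `m^k ≠ 0`.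
Then in `ℙ(A)`, the point `[exp(t·m)]` tends to `[m^k]` as the real parameter `t → +∞`.
(The exponentials `exp(t·m)` are units, in particular nonzero; the existence of this
nonvanishing proof is part of the statement.) -/
theorem tendsto_exp_smul_nilpotent_proj
    (A : Type*) [NormedCommRing A] [NormedAlgebra ℂ A] [FiniteDimensional ℂ A]
    [IsLocalRing A]
    (m : A) (hm : m ∈ IsLocalRing.maximalIdeal A) (hm0 : m ≠ 0)
    (k : ℕ) (hk : 1 ≤ k) (hkne : m ^ k ≠ 0) (hksucc : m ^ (k + 1) = 0) :
    ∃ h : ∀ t : ℝ, nilExp ((t : ℂ) • m) ≠ 0,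
      Tendsto (fun t : ℝ => Projectivization.mk ℂ (nilExp ((t : ℂ) • m)) (h t))
        atTop (nhds (Projectivization.mk ℂ (m ^ k) hkne)) := by
  classical
  have hmaxne : (IsLocalRing.maximalIdeal A : Ideal A) ≠ ⊤ :=
    (IsLocalRing.maximalIdeal.isMaximal A).ne_top
  -- nilpotency class of t • m for t ≠ 0
  have hclass : ∀ t : ℝ, t ≠ 0 → nilpotencyClass ((t : ℂ) • m) = k + 1 := by
    intro t ht
    have htc : (t : ℂ) ≠ 0 := by exact_mod_cast ht
    rw [nilpotencyClass_eq_succ_iff]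
    constructor
    · rw [smul_pow, hksucc, smul_zero]
    · rw [smul_pow]
      intro h
      apply hkne
      have h2 : ((t : ℂ) ^ k)⁻¹ • ((t : ℂ) ^ k • m ^ k) = 0 := by rw [h, smul_zero]
      rwa [smul_smul, inv_mul_cancel₀ (pow_ne_zero _ htc), one_smul] at h2
  -- formula for nilExp (t • m) for t ≠ 0
  have hformula : ∀ t : ℝ, t ≠ 0 → nilExp ((t : ℂ) • m)
      = ∑ i ∈ Finset.range (k + 1), ((i.factorial : ℂ)⁻¹ * (t : ℂ) ^ i) • m ^ i := by
    intro t ht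
    rw [nilExp, hclass t ht]
    exact Finset.sum_congr rfl fun i _ => by rw [smul_pow, smul_smul]
  -- nonvanishing
  have h : ∀ t : ℝ, nilExp ((t : ℂ) • m) ≠ 0 := by
    intro t
    by_cases ht : t = 0
    · subst ht
      have : nilExp (((0 : ℝ) : ℂ) • m) = 1 := by
        rw [Complex.ofReal_zero, zero_smul, nilExp, nilpotencyClass_zero]
        simp
      rw [this]; exact one_ne_zero
    · intro h0
      rw [hformula t ht, Finset.sum_range_succ'] at h0
      have h1 : (((Nat.factorial 0 : ℕ) : ℂ)⁻¹ * (t : ℂ) ^ 0) • m ^ 0 = 1 := by simp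
      rw [h1] at h0
      set S : A := ∑ i ∈ Finset.range k,
        ((((i + 1).factorial : ℕ) : ℂ)⁻¹ * (t : ℂ) ^ (i + 1)) • m ^ (i + 1) with hS
      have hmem : S ∈ IsLocalRing.maximalIdeal A := by
        refine Submodule.sum_mem _ fun i _ => Submodule.smul_of_tower_mem _ _ ?_
        rw [pow_succ]
        exact Ideal.mul_mem_left _ _ hm
      apply hmaxne
      rw [Ideal.eq_top_iff_one]
      have hone : (1 : A) = -S := by linear_combination h0
      rw [hone]
      exact neg_mem hmem
  refine ⟨h, ?_⟩
  -- the rescaled function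
  set F : ℝ → A := fun t => ∑ i ∈ Finset.range (k + 1),
    ((k.factorial : ℂ) * (i.factorial : ℂ)⁻¹ * ((t : ℂ) ^ i / (t : ℂ) ^ k)) • m ^ i with hF
  -- F tends to m ^ k
  have hFtend : Tendsto F atTop (nhds (m ^ k)) := by
    have hsum : ∀ t : ℝ, F t = (∑ i ∈ Finset.range k,
        ((k.factorial : ℂ) * (i.factorial : ℂ)⁻¹ * ((t : ℂ) ^ i / (t : ℂ) ^ k)) • m ^ i)
        + ((k.factorial : ℂ) * (k.factorial : ℂ)⁻¹ * ((t : ℂ) ^ k / (t : ℂ) ^ k)) • m ^ k :=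
      fun t => Finset.sum_range_succ _ k
    rw [show (m ^ k : A) = 0 + m ^ k by rw [zero_add]]
    refine Tendsto.congr (fun t => (hsum t).symm) (Tendsto.add ?_ ?_)
    · rw [show (0 : A) = ∑ i ∈ Finset.range k, (0 : A) from (Finset.sum_const_zero).symm]
      refine tendsto_finset_sum _ fun i hi => ?_
      have hi' : i < k := Finset.mem_range.mp hi
      have h2 : Tendsto (fun t : ℝ => ((t : ℂ) ^ i / (t : ℂ) ^ k)) atTop (nhds 0) := by
        have h3 : Tendsto (fun t : ℝ => t ^ i / t ^ k) atTop (nhds 0) :=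
          tendsto_pow_div_pow_atTop_zero hi'
        have h4 := (Complex.continuous_ofReal.tendsto 0).comp h3
        refine h4.congr fun t => ?_
        simp only [Function.comp_apply]
        push_cast
        ring
      have h5 : Tendsto (fun t : ℝ =>
          (k.factorial : ℂ) * (i.factorial : ℂ)⁻¹ * ((t : ℂ) ^ i / (t : ℂ) ^ k))
          atTop (nhds 0) := by
        have := h2.const_mul ((k.factorial : ℂ) * (i.factorial : ℂ)⁻¹)
        simpa using this
      simpa using h5.smul_const (m ^ i)
    · refine Tendsto.congr' ?_ tendsto_const_nhds
      filter_upwards [eventually_gt_atTop (0 : ℝ)] with t ht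
      have htc : (t : ℂ) ≠ 0 := by exact_mod_cast ht.ne'
      rw [div_self (pow_ne_zero _ htc),
        mul_inv_cancel₀ (by exact_mod_cast k.factorial_ne_zero : (k.factorial : ℂ) ≠ 0),
        one_mul, one_smul]
  -- eventually F t ≠ 0
  have hFev : ∀ᶠ t : ℝ in atTop, F t ≠ 0 := hFtend.eventually_ne hkne
  -- lift to the subtype of nonzero vectors
  set g : ℝ → { v : A // v ≠ 0 } := fun t =>
    if hFt : F t ≠ 0 then ⟨F t, hFt⟩ else ⟨m ^ k, hkne⟩ with hg
  have hgtend : Tendsto g atTop (nhds (⟨m ^ k, hkne⟩ : { v : A // v ≠ 0 })) := by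
    rw [tendsto_subtype_rng]
    refine Tendsto.congr' ?_ hFtend
    filter_upwards [hFev] with t ht
    simp [hg, ht]
  have hcont : Continuous (Projectivization.mk' ℂ : { v : A // v ≠ 0 } → Projectivization ℂ A) :=
    continuous_quotient_mk'
  have hqt : Tendsto (fun t : ℝ => Projectivization.mk' ℂ (g t)) atTop
      (nhds (Projectivization.mk ℂ (m ^ k) hkne)) :=
    (hcont.tendsto _).comp hgtend
  refine Tendsto.congr' ?_ hqt
  filter_upwards [hFev, eventually_gt_atTop (0 : ℝ)] with t hFt ht
  have htc : (t : ℂ) ≠ 0 := by exact_mod_cast ht.ne'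
  have hgF : g t = ⟨F t, hFt⟩ := by simp [hg, hFt]
  rw [hgF, Projectivization.mk'_eq_mk]
  symm
  rw [Projectivization.mk_eq_mk_iff' ℂ _ _ (h t) hFt]
  -- F t = c • nilExp with c = k! / t^k ; so (c⁻¹) • F t = nilExp
  refine ⟨((t : ℂ) ^ k) * (k.factorial : ℂ)⁻¹, ?_⟩
  rw [hformula t ht.ne']
  rw [hF]
  rw [Finset.smul_sum]
  refine Finset.sum_congr rfl fun i _ => ?_
  rw [smul_smul]
  congr 1
  have hfk : (k.factorial : ℂ) ≠ 0 := by exact_mod_cast k.factorial_ne_zero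
  have hfi : (i.factorial : ℂ) ≠ 0 := by exact_mod_cast i.factorial_ne_zero
  have htk : ((t : ℂ)) ^ k ≠ 0 := pow_ne_zero _ htc
  field_simp
end

section
/- Let A be a finite-dimensional commutative local ℂ-algebra with maximal ideal 𝔪. Suppose that for every a ∈ 𝔪∖{0} there exist m ∈ 𝔪, an integer k ≥ 1, and a unit c ∈ A^* such that m^{k+1} = 0 and m^k = c·a. Then 𝔪² = 0. -/
/-!
An element `a ∈ 𝔪 ∖ 𝔪²` squares to zero: an `m ∈ 𝔪` with `m ^ k = c * a` puts `a` in `𝔪 ^ k`,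
so `k = 1` and `a² = c⁻² m² = 0`. Since `2` is invertible, polarising along `x + y` or `x + 2y`
shows that products of two such elements vanish, whence `𝔪² ≤ 𝔪³`, and Nakayama's lemma
gives `𝔪² = 0`.
-/

namespace Ideal

variable {R : Type*} [CommRing R]

theorem sq_eq_zero_of_pow_eq_unit_mul {I : Ideal R} {a m : R} {k : ℕ} {c : Rˣ}
    (hm : m ∈ I) (ha : a ∉ I ^ 2) (hk : 1 ≤ k) (hm_zero : m ^ (k + 1) = 0)
    (hmk : m ^ k = c * a) : a ^ 2 = 0 := by
  have ha_eq : a = ↑c⁻¹ * m ^ k := by rw [hmk, Units.inv_mul_cancel_left]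
  obtain rfl : k = 1 := by
    by_contra hk1
    exact ha (ha_eq ▸ (I ^ 2).mul_mem_left _ (pow_le_pow_right (by omega) (pow_mem_pow hm k)))
  have hm_sq : m ^ 2 = 0 := hm_zero
  rw [ha_eq, pow_one, mul_pow, hm_sq, mul_zero]

theorem mul_eq_zero_of_sq_eq_zero_of_notMem {I J : Ideal R} (h2 : IsUnit (2 : R))
    (hsq : ∀ x ∈ I, x ∉ J → x ^ 2 = 0) {x y : R} (hx : x ∈ I) (hy : y ∈ I)
    (hxJ : x ∉ J) (hyJ : y ∉ J) : x * y = 0 := by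
  have hx_sq := hsq x hx hxJ
  have hy_sq := hsq y hy hyJ
  by_cases hxy : x + y ∈ J
  · have hx2y : x + 2 * y ∉ J := fun h ↦ hyJ (by simpa [two_mul] using J.sub_mem h hxy)
    have hx2y_sq := hsq _ (I.add_mem hx (I.mul_mem_left 2 hy)) hx2y
    have : (2 : R) * (2 * (x * y)) = 0 := by linear_combination hx2y_sq - hx_sq - 4 * hy_sq
    exact h2.mul_right_eq_zero.mp (h2.mul_right_eq_zero.mp this)
  · have hxy_sq := hsq _ (I.add_mem hx hy) hxy
    exact h2.mul_right_eq_zero.mp (by linear_combination hxy_sq - hx_sq - hy_sq)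

theorem sq_le_pow_three_of_sq_eq_zero {I : Ideal R} (h2 : IsUnit (2 : R))
    (hsq : ∀ x ∈ I, x ∉ I ^ 2 → x ^ 2 = 0) : I ^ 2 ≤ I ^ 3 := by
  rw [sq, Ideal.mul_le]
  intro x hx y hy
  by_cases hx2 : x ∈ I ^ 2
  · exact pow_succ I 2 ▸ mul_mem_mul hx2 hy
  by_cases hy2 : y ∈ I ^ 2
  · exact mul_comm y x ▸ pow_succ I 2 ▸ mul_mem_mul hy2 hx
  rw [mul_eq_zero_of_sq_eq_zero_of_notMem h2 hsq hx hy hx2 hy2]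
  exact zero_mem _

theorem pow_eq_bot_of_pow_le_pow_succ [IsNoetherianRing R] {I : Ideal R} {n : ℕ}
    (hI : I ≤ jacobson ⊥) (h : I ^ n ≤ I ^ (n + 1)) : I ^ n = ⊥ :=
  Submodule.eq_bot_of_le_smul_of_le_jacobson_bot I _ (IsNoetherian.noetherian _)
    (by rwa [smul_eq_mul, ← pow_succ']) hI

end Ideal

/-- Let `A` be a finite-dimensional commutative local `ℂ`-algebra with maximal ideal `𝔪`.
Suppose that for every `a ∈ 𝔪 ∖ {0}` there exist `m ∈ 𝔪`, an integer `k ≥ 1` and a unit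
`c ∈ A^*` such that `m^(k+1) = 0` and `m^k = c·a`.  Then `𝔪² = 0`. -/
theorem maximalIdeal_sq_eq_bot_of_op_condition
    (A : Type*) [CommRing A] [Algebra ℂ A] [FiniteDimensional ℂ A] [IsLocalRing A]
    (hOP : ∀ a ∈ IsLocalRing.maximalIdeal A, a ≠ 0 →
      ∃ m ∈ IsLocalRing.maximalIdeal A, ∃ k : ℕ, 1 ≤ k ∧ ∃ c : Aˣ,
        m ^ (k + 1) = 0 ∧ m ^ k = (c : A) * a) :
    IsLocalRing.maximalIdeal A ^ 2 = ⊥ := by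
  have : IsNoetherianRing A := .of_finite ℂ A
  have h2 : IsUnit (2 : A) :=
    map_ofNat (algebraMap ℂ A) 2 ▸ (IsUnit.mk0 (2 : ℂ) two_ne_zero).map (algebraMap ℂ A)
  refine Ideal.pow_eq_bot_of_pow_le_pow_succ (IsLocalRing.maximalIdeal_le_jacobson ⊥)
    (Ideal.sq_le_pow_three_of_sq_eq_zero h2 fun a ha ha2 ↦ ?_)
  obtain ⟨m, hm, k, hk, c, hm_zero, hmk⟩ :=
    hOP a ha (ne_of_mem_of_not_mem (Ideal.zero_mem _) ha2).symm
  exact Ideal.sq_eq_zero_of_pow_eq_unit_mul hm ha2 hk hm_zero hmk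
end

section
/- Let (A, U) be a nondegenerate H-pair of degree d ≥ 2. Then for every m ∈ 𝔪, one has m^d ∈ U if and only if m^d = 0. -/
/-- The socle of a commutative local ring: `Soc(A) = {a ∈ A : a·𝔪 = 0}`. -/
def socle (A : Type*) [CommRing A] [IsLocalRing A] : Ideal A where
  carrier := {a : A | ∀ m ∈ IsLocalRing.maximalIdeal A, a * m = 0}
  add_mem' := by
    intro a b ha hb m hm
    rw [add_mul, ha m hm, hb m hm, add_zero]
  zero_mem' := by
    intro m hm
    rw [zero_mul]
  smul_mem' := by
    intro c a ha m hm
    show c * a * m = 0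
    rw [mul_assoc, ha m hm, mul_zero]

/-- Let `(A, U)` be a nondegenerate H-pair of degree `d ≥ 2`.  Then for every `m ∈ 𝔪`,
one has `m^d ∈ U` if and only if `m^d = 0`. -/
theorem pow_deg_mem_iff_pow_deg_eq_zero
    (A : Type*) [CommRing A] [Algebra ℂ A] [FiniteDimensional ℂ A] [IsLocalRing A]
    -- `(A, U)` is an H-pair:
    (U : Submodule ℂ A)
    (hUm : U ≤ (IsLocalRing.maximalIdeal A).restrictScalars ℂ)
    (hgen : Algebra.adjoin ℂ (U : Set A) = ⊤)
    -- of degree `d ≥ 2`: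
    (d : ℕ) (hd : 2 ≤ d)
    (hdeg₁ : ¬ ((IsLocalRing.maximalIdeal A ^ d : Ideal A) : Set A) ⊆ (U : Set A))
    (hdeg₂ : ∀ e : ℕ, d < e →
      ((IsLocalRing.maximalIdeal A ^ e : Ideal A) : Set A) ⊆ (U : Set A))
    -- nondegenerate: `dim_ℂ Soc(A) = 1` and `𝔪 = U ⊕ Soc(A)`:
    (hsoc : Module.finrank ℂ (socle A) = 1)
    (hsup : U ⊔ (socle A).restrictScalars ℂ = (IsLocalRing.maximalIdeal A).restrictScalars ℂ)
    (hinf : U ⊓ (socle A).restrictScalars ℂ = ⊥) :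
    ∀ m ∈ IsLocalRing.maximalIdeal A, (m ^ d ∈ U ↔ m ^ d = 0) := by
  intro m hm
  have hart : IsArtinianRing A := isArtinian_of_tower ℂ inferInstance
  have hnil : IsNilpotent (IsLocalRing.maximalIdeal A) := by
    rw [← IsLocalRing.jacobson_eq_maximalIdeal (⊥ : Ideal A) bot_ne_top]
    exact IsArtinianRing.isNilpotent_jacobson_bot
  obtain ⟨n, hn⟩ := hnil
  -- descent: 𝔪^e = 0 for all e > d
  have key : ∀ j e : ℕ, d < e → n ≤ e + j → (IsLocalRing.maximalIdeal A) ^ e = ⊥ := by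
    intro j
    induction j with
    | zero =>
      intro e _ hne
      rw [Nat.add_zero] at hne
      have := Ideal.pow_le_pow_right (I := IsLocalRing.maximalIdeal A) hne
      rw [hn] at this
      exact le_bot_iff.mp this
    | succ j ih =>
      intro e he hne
      have hsucc : (IsLocalRing.maximalIdeal A) ^ (e + 1) = ⊥ :=
        ih (e + 1) (lt_trans he (Nat.lt_succ_self e)) (by omega)
      -- 𝔪^e ⊆ U ⊓ socle = ⊥
      apply le_bot_iff.mp
      intro a ha
      have haU : a ∈ U := hdeg₂ e he ha
      have haS : a ∈ socle A := by
        intro x hx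
        have : a * x ∈ (IsLocalRing.maximalIdeal A) ^ (e + 1) := by
          rw [pow_succ]
          exact Ideal.mul_mem_mul ha hx
        rwa [hsucc, Ideal.mem_bot] at this
      have : a ∈ U ⊓ (socle A).restrictScalars ℂ := ⟨haU, haS⟩
      rw [hinf] at this
      exact this
  have hmd1 : (IsLocalRing.maximalIdeal A) ^ (d + 1) = ⊥ :=
    key n (d + 1) (Nat.lt_succ_self d) (by omega)
  constructor
  · intro hU
    have hS : m ^ d ∈ socle A := by
      intro x hx
      have : m ^ d * x ∈ (IsLocalRing.maximalIdeal A) ^ (d + 1) := by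
        rw [pow_succ]
        exact Ideal.mul_mem_mul (Ideal.pow_mem_pow hm d) hx
      rwa [hmd1, Ideal.mem_bot] at this
    have : m ^ d ∈ U ⊓ (socle A).restrictScalars ℂ := ⟨hU, hS⟩
    rw [hinf] at this
    exact this
  · intro h
    rw [h]
    exact U.zero_mem
end

section
/- Let (A, U) be a nondegenerate H-pair of degree d ≥ 2 satisfying the OP-condition. Then d = 2 or d = 3. -/
/-- Let `(A, U)` be a nondegenerate H-pair of degree `d ≥ 2` satisfying the OP-condition.
Then `d = 2` or `d = 3`. -/
theorem deg_eq_two_or_three_of_op_condition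
    (A : Type*) [CommRing A] [Algebra ℂ A] [FiniteDimensional ℂ A] [IsLocalRing A]
    -- `(A, U)` is an H-pair:
    (U : Submodule ℂ A)
    (hUm : U ≤ (IsLocalRing.maximalIdeal A).restrictScalars ℂ)
    (hgen : Algebra.adjoin ℂ (U : Set A) = ⊤)
    -- of degree `d ≥ 2`:
    (d : ℕ) (hd : 2 ≤ d)
    (hdeg₁ : ¬ ((IsLocalRing.maximalIdeal A ^ d : Ideal A) : Set A) ⊆ (U : Set A))
    (hdeg₂ : ∀ e : ℕ, d < e →
      ((IsLocalRing.maximalIdeal A ^ e : Ideal A) : Set A) ⊆ (U : Set A))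
    -- nondegenerate: `dim_ℂ Soc(A) = 1` and `𝔪 = U ⊕ Soc(A)`:
    (hsoc : Module.finrank ℂ (socle A) = 1)
    (hsup : U ⊔ (socle A).restrictScalars ℂ = (IsLocalRing.maximalIdeal A).restrictScalars ℂ)
    (hinf : U ⊓ (socle A).restrictScalars ℂ = ⊥)
    -- the OP-condition (algebraic form):
    (hOP : ∀ m ∈ IsLocalRing.maximalIdeal A, m ^ d = 0 →
      ∃ c : Aˣ, ∃ u ∈ U, ∃ k : ℕ, 1 ≤ k ∧ u ^ (k + 1) = 0 ∧ m = (c : A) * u ^ k) :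
    d = 2 ∨ d = 3 := by
  classical
  set M := IsLocalRing.maximalIdeal A with hMdef
  -- the maximal ideal is nilpotent
  have hart : IsArtinianRing A := isArtinian_of_tower ℂ inferInstance
  have hnil : IsNilpotent M := by
    have := IsArtinianRing.isNilpotent_jacobson_bot (R := A)
    rwa [IsLocalRing.jacobson_eq_maximalIdeal _ bot_ne_top] at this
  obtain ⟨N, hN⟩ := hnil
  have hex : ∃ n, M ^ n = 0 := ⟨N, hN⟩
  -- M ^ (d+1) = 0
  have hd1 : M ^ (d + 1) = ⊥ := by
    set t := Nat.find hex with htdef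
    have ht : M ^ t = 0 := Nat.find_spec hex
    have htle : t ≤ d + 1 := by
      by_contra hcon
      push_neg at hcon
      have ht1 : M ^ (t - 1) ≠ 0 := Nat.find_min hex (by omega)
      apply ht1
      rw [show (0 : Ideal A) = ⊥ from rfl, eq_bot_iff]
      intro a ha
      have hU : a ∈ U := hdeg₂ (t - 1) (by omega) ha
      have hsoca : a ∈ socle A := by
        intro m hm
        have h1 : a * m ∈ M ^ (t - 1) * M := Ideal.mul_mem_mul ha hm
        rw [← pow_succ, show t - 1 + 1 = t by omega, ht] at h1
        exact h1
      have : a ∈ U ⊓ (socle A).restrictScalars ℂ := ⟨hU, hsoca⟩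
      rw [hinf] at this
      exact this
    rw [eq_bot_iff]
    calc M ^ (d + 1) ≤ M ^ t := Ideal.pow_le_pow_right htle
    _ = ⊥ := ht
  have hzero : ∀ e : ℕ, d + 1 ≤ e → M ^ e = ⊥ := by
    intro e he
    rw [eq_bot_iff]
    calc M ^ e ≤ M ^ (d + 1) := Ideal.pow_le_pow_right he
    _ = ⊥ := hd1
  -- suppose d ≥ 4
  by_contra hcon
  push_neg at hcon
  have h4 : 4 ≤ d := by omega
  -- every element of M^2 squares to zero
  have hsq : ∀ x ∈ M ^ 2, x * x = 0 := by
    intro x hx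
    have hxM : x ∈ M := Ideal.pow_le_self two_ne_zero hx
    have hxd : x ^ d = 0 := by
      have h1 : x ^ d ∈ (M ^ 2) ^ d := Ideal.pow_mem_pow hx d
      rw [← pow_mul, hzero (2 * d) (by omega)] at h1
      exact h1
    obtain ⟨c, u, hu, k, hk1, huk, hxcu⟩ := hOP x hxM hxd
    calc x * x = (c : A) * u ^ k * ((c : A) * u ^ k) := by rw [hxcu]
    _ = (c : A) * (c : A) * (u ^ (k + 1) * u ^ (k - 1)) := by
        rw [← pow_add, show k + 1 + (k - 1) = k + k by omega]; ring
    _ = 0 := by rw [huk]; ring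
  -- polarization: products of elements of M^2 vanish
  have hmul : ∀ x ∈ M ^ 2, ∀ y ∈ M ^ 2, x * y = 0 := by
    intro x hx y hy
    have h1 := hsq (x + y) (Ideal.add_mem _ hx hy)
    have h2 := hsq x hx
    have h3 := hsq y hy
    have h2xy : (2 : A) * (x * y) = 0 := by linear_combination h1 - h2 - h3
    have h2unit : IsUnit (2 : A) := by
      have : (2 : A) = algebraMap ℂ A 2 := by
        rw [map_ofNat]
      rw [this]
      exact IsUnit.map _ (isUnit_iff_ne_zero.mpr (by norm_num))
    obtain ⟨w, hw⟩ := h2unit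
    rw [← hw] at h2xy
    exact (Units.mul_right_eq_zero w).mp h2xy
  -- so M^4 = 0
  have h4z : M ^ 4 = ⊥ := by
    have heq : M ^ 4 = M ^ 2 * M ^ 2 := by rw [← pow_add]
    rw [heq, eq_bot_iff]
    refine Submodule.mul_le.mpr fun x hx y hy => ?_
    rw [Ideal.mem_bot]
    exact hmul x hx y hy
  -- contradiction with hdeg₁
  apply hdeg₁
  intro a ha
  have h1 : a ∈ M ^ 4 := Ideal.pow_le_pow_right h4 ha
  rw [h4z, Ideal.mem_bot] at h1
  rw [h1]
  exact U.zero_mem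
end

section
/- Let (A, U) be a nondegenerate H-pair of degree d = 3 satisfying the OP-condition. Then there is a ℂ-algebra isomorphism from A to ℂ[x]/(x⁴) carrying U onto the ℂ-linear span of the images of x and x². -/
open Polynomial

/-!
The OP-condition makes every cube-zero element of `𝔪` square-zero: if `m = c * u ^ k` with
`u ^ (k + 1) = 0`, then `m ^ 2 = c ^ 2 * u ^ (2 * k) = 0`. Consequently square-zero elements of `𝔪`
multiply to zero (`(x + y) ^ 3 = 0` forces `(x + y) ^ 2 = 2 x y = 0`), and some `t ∈ 𝔪` has
`t ^ 3 ≠ 0`. The degree and nondegeneracy conditions give `𝔪 ^ 4 = 0` and `Soc(A) = ℂ ∙ t ^ 3`.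
Solving a cubic equation, every `y ∈ 𝔪` differs from a multiple of `t` by a cube-zero, hence
square-zero, element, and every square-zero element lies in `span {t ^ 2, t ^ 3}`; so
`𝔪 = span {t, t ^ 2, t ^ 3}`. Correcting `t` by socle elements gives `s ∈ U` with `s ^ 2 ∈ U` and
`s ^ 3 = t ^ 3`. As `U` meets the socle trivially, `U = span {s, s ^ 2}`, and as `U` generates `A`,
`x ↦ s` induces `ℂ[x]/(x⁴) ≃ A`.
-/

open Submodule IsLocalRing

theorem Submodule.eq_span_singleton_of_finrank_eq_one {K M : Type*} [Field K] [AddCommGroup M]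
    [Module K M] {V : Submodule K M} (hV : Module.finrank K V = 1) {v : M} (hv : v ∈ V)
    (hv0 : v ≠ 0) : V = K ∙ v := by
  have := Module.finite_of_finrank_eq_succ hV
  refine (eq_of_le_of_finrank_le ((span_singleton_le_iff_mem _ _).mpr hv) ?_).symm
  rw [hV, finrank_span_singleton hv0]

theorem Submodule.eq_span_pair_of_le_span_triple {R M : Type*} [Ring R] [AddCommGroup M]
    [Module R M] {U : Submodule R M} {x y z : M} (hx : x ∈ U) (hy : y ∈ U)
    (hU : U ≤ span R {x, y, z}) (hUz : U ⊓ R ∙ z = ⊥) : U = span R {x, y} := by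
  refine le_antisymm (fun u hu => ?_) (span_le.mpr (Set.insert_subset hx (by simpa using hy)))
  obtain ⟨a, b, c, rfl⟩ := mem_span_triple.mp (hU hu)
  have hc : c • z ∈ U ⊓ R ∙ z := by
    refine ⟨?_, smul_mem _ _ (mem_span_singleton_self z)⟩
    simpa using sub_mem hu (add_mem (U.smul_mem a hx) (U.smul_mem b hy))
  rw [hUz, mem_bot] at hc
  rw [hc, add_zero]
  exact mem_span_pair.mpr ⟨a, b, rfl⟩

section Monogenic

variable {K A : Type*} [Field K] [CommRing A] [Algebra K A]

theorem minpoly.eq_X_pow_of_pow_eq_zero {s : A} {n : ℕ} (hs : s ^ (n + 1) = 0)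
    (hs' : s ^ n ≠ 0) : minpoly K s = X ^ (n + 1) := by
  have hX : Polynomial.aeval s (X ^ (n + 1) : K[X]) = 0 := by rw [map_pow, aeval_X, hs]
  obtain ⟨i, hi, hassoc⟩ := (dvd_prime_pow prime_X _).mp (minpoly.dvd K s hX)
  have hmin := eq_of_monic_of_associated (minpoly.monic ⟨_, monic_X_pow _, hX⟩)
    (monic_X_pow i) hassoc
  have hsi : s ^ i = 0 := by rw [← aeval_X (R := K) s, ← map_pow, ← hmin, minpoly.aeval]
  obtain rfl : i = n + 1 := by
    by_contra hne
    exact hs' (pow_eq_zero_of_le (by omega) hsi)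
  exact hmin

theorem exists_algEquiv_quotient_span_X_pow {s : A} {n : ℕ} (hs : s ^ (n + 1) = 0)
    (hs' : s ^ n ≠ 0) (hsurj : Function.Surjective (aeval (R := K) s)) :
    ∃ e : A ≃ₐ[K] K[X] ⧸ Ideal.span {(X : K[X]) ^ (n + 1)}, e s = Ideal.Quotient.mk _ X := by
  have hker : RingHom.ker (aeval s) = Ideal.span {(X : K[X]) ^ (n + 1)} := by
    rw [minpoly.ker_aeval_eq_span_minpoly, minpoly.eq_X_pow_of_pow_eq_zero hs hs']
  refine ⟨(Ideal.quotientKerAlgEquivOfSurjective hsurj).symm.trans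
    (Ideal.quotientEquivAlgOfEq K hker), ?_⟩
  have h := Ideal.quotientKerAlgEquivOfSurjective_symm_apply hsurj X
  rw [aeval_X] at h
  rw [AlgEquiv.trans_apply, h, Ideal.quotientEquivAlgOfEq_mk]

theorem aeval_surjective_of_adjoin_span_eq_top {s : A}
    (h : Algebra.adjoin K (span K {s, s ^ 2} : Set A) = ⊤) :
    Function.Surjective (aeval (R := K) s) := by
  rw [← AlgHom.range_eq_top, ← Algebra.adjoin_singleton_eq_range_aeval, eq_top_iff, ← h,
    Algebra.adjoin_span]
  exact Algebra.adjoin_le (Set.insert_subset (Algebra.self_mem_adjoin_singleton K s)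
    (Set.singleton_subset_iff.mpr (pow_mem (Algebra.self_mem_adjoin_singleton K s) 2)))

end Monogenic

section SquareZero

variable {A : Type*} [CommRing A] {I : Ideal A}

theorem mul_eq_zero_of_sq_eq_zero (h2 : IsUnit (2 : A))
    (hcube : ∀ m ∈ I, m ^ 3 = 0 → m ^ 2 = 0) {x y : A} (hx : x ∈ I) (hy : y ∈ I)
    (hx2 : x ^ 2 = 0) (hy2 : y ^ 2 = 0) : x * y = 0 := by
  have hxy : (x + y) ^ 2 = 0 :=
    hcube _ (add_mem hx hy) (by linear_combination (x + 3 * y) * hx2 + (3 * x + y) * hy2)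
  exact h2.mul_right_eq_zero.mp (by linear_combination hxy - hx2 - hy2)

theorem exists_pow_three_ne_zero (h2 : IsUnit (2 : A))
    (hcube : ∀ m ∈ I, m ^ 3 = 0 → m ^ 2 = 0) (hI3 : I ^ 3 ≠ ⊥) : ∃ t ∈ I, t ^ 3 ≠ 0 := by
  by_contra! h
  have hsq : ∀ x ∈ I, x ^ 2 = 0 := fun x hx => hcube x hx (h x hx)
  have hI2 : I ^ 2 = ⊥ := by
    rw [eq_bot_iff, pow_two, Ideal.mul_le]
    exact fun x hx y hy => mul_eq_zero_of_sq_eq_zero h2 hcube hx hy (hsq x hx) (hsq y hy)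
  exact hI3 (by rw [pow_succ, hI2, Ideal.bot_mul])

theorem mul_mul_mul_eq_zero_of_pow_four_eq_bot (hI4 : I ^ 4 = ⊥) {x y z w : A} (hx : x ∈ I)
    (hy : y ∈ I) (hz : z ∈ I) (hw : w ∈ I) : x * y * z * w = 0 := by
  have h : x * y * z * w ∈ I ^ 4 := by
    simpa [pow_succ] using
      Ideal.mul_mem_mul (Ideal.mul_mem_mul (Ideal.mul_mem_mul hx hy) hz) hw
  rwa [hI4, Ideal.mem_bot] at h

end SquareZero

section EmbeddingDimensionOne

variable {K A : Type*} [Field K] [CommRing A] [Algebra K A] {I : Ideal A} {t : A}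

variable (K) in
theorem isUnit_two_of_charZero [CharZero K] : IsUnit (2 : A) := by
  have h := (IsUnit.mk0 (2 : K) two_ne_zero).map (algebraMap K A)
  rwa [map_ofNat] at h

theorem mul_mul_mem_span_of_pow_four_eq_bot (hI4 : I ^ 4 = ⊥)
    (hann : ∀ a, (∀ x ∈ I, a * x = 0) → a ∈ K ∙ t ^ 3) {x y z : A} (hx : x ∈ I) (hy : y ∈ I)
    (hz : z ∈ I) : x * y * z ∈ K ∙ t ^ 3 :=
  hann _ fun _ hw => mul_mul_mul_eq_zero_of_pow_four_eq_bot hI4 hx hy hz hw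

theorem exists_sub_smul_pow_three_eq_zero [IsAlgClosed K] (hI4 : I ^ 4 = ⊥)
    (hann : ∀ a, (∀ x ∈ I, a * x = 0) → a ∈ K ∙ t ^ 3) (ht : t ∈ I) {y : A} (hy : y ∈ I) :
    ∃ l : K, (y - l • t) ^ 3 = 0 := by
  obtain ⟨a, ha⟩ := mem_span_singleton.mp (mul_mul_mem_span_of_pow_four_eq_bot hI4 hann hy hy hy)
  obtain ⟨b, hb⟩ := mem_span_singleton.mp (mul_mul_mem_span_of_pow_four_eq_bot hI4 hann hy hy ht)
  obtain ⟨c, hc⟩ := mem_span_singleton.mp (mul_mul_mem_span_of_pow_four_eq_bot hI4 hann hy ht ht)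
  obtain ⟨l, hl⟩ := IsAlgClosed.exists_root (X ^ 3 - C (3 * c) * X ^ 2 + C (3 * b) * X - C a)
    (ne_of_eq_of_ne (by compute_degree!) (by decide : (3 : WithBot ℕ) ≠ 0))
  have hl' : algebraMap K A (l ^ 3 - 3 * c * l ^ 2 + 3 * b * l - a) = 0 := by
    simpa using congrArg (algebraMap K A) hl
  refine ⟨l, ?_⟩
  -- `(y - l t) ^ 3 = (a - 3 l b + 3 l ^ 2 c - l ^ 3) t ^ 3`
  simp only [Algebra.smul_def, map_sub, map_add, map_mul, map_pow, map_ofNat] at ha hb hc hl' ⊢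
  linear_combination ha.symm - 3 * algebraMap K A l * hb.symm
    + 3 * algebraMap K A l ^ 2 * hc.symm - t ^ 3 * hl'

theorem sq_mul_eq_zero_of_sq_eq_zero [CharZero K] (hI4 : I ^ 4 = ⊥)
    (hann : ∀ a, (∀ x ∈ I, a * x = 0) → a ∈ K ∙ t ^ 3)
    (hcube : ∀ m ∈ I, m ^ 3 = 0 → m ^ 2 = 0) (ht : t ∈ I) {n : A} (hn : n ∈ I)
    (hn2 : n ^ 2 = 0) : t ^ 2 * n = 0 := by
  obtain ⟨c, hc⟩ := mem_span_singleton.mp (mul_mul_mem_span_of_pow_four_eq_bot hI4 hann ht ht hn)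
  rcases eq_or_ne c 0 with rfl | hc0
  · rw [pow_two, ← hc, zero_smul]
  rw [Algebra.smul_def] at hc
  -- `μ` is chosen so that `(t + μ n) ^ 3 = (1 + 3 μ c) t ^ 3 = 0`; then `t = (t + μ n) - μ n` is
  -- a sum of square-zero elements, hence itself square-zero.
  obtain ⟨μ, hμ⟩ : ∃ μ : K, 1 + 3 * μ * c = 0 := ⟨-(3 * c)⁻¹, by field_simp; ring⟩
  replace hμ := congrArg (algebraMap K A) hμ
  rw [map_add, map_mul, map_mul, map_one, map_ofNat, map_zero] at hμ
  have hs : t + algebraMap K A μ * n ∈ I := add_mem ht (I.mul_mem_left _ hn)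
  have hs2 : (t + algebraMap K A μ * n) ^ 2 = 0 := hcube _ hs <| by
    linear_combination t ^ 3 * hμ - 3 * algebraMap K A μ * hc
      + (3 * algebraMap K A μ ^ 2 * t + algebraMap K A μ ^ 3 * n) * hn2
  have hsn := mul_eq_zero_of_sq_eq_zero (isUnit_two_of_charZero K) hcube hs hn hs2 hn2
  have ht2 : t ^ 2 = 0 := by
    linear_combination hs2 - 2 * algebraMap K A μ * hsn + algebraMap K A μ ^ 2 * hn2
  rw [ht2, zero_mul]

theorem mem_span_sq_cube_of_sq_eq_zero [IsAlgClosed K] [CharZero K] (hI4 : I ^ 4 = ⊥)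
    (hann : ∀ a, (∀ x ∈ I, a * x = 0) → a ∈ K ∙ t ^ 3)
    (hcube : ∀ m ∈ I, m ^ 3 = 0 → m ^ 2 = 0) (ht : t ∈ I) {n : A} (hn : n ∈ I)
    (hn2 : n ^ 2 = 0) : n ∈ span K {t ^ 2, t ^ 3} := by
  have htn := sq_mul_eq_zero_of_sq_eq_zero hI4 hann hcube ht hn hn2
  have hmul : ∀ x ∈ I, ∃ l : K, n * x = l • (n * t) ∧ t ^ 2 * x = l • t ^ 3 := by
    intro x hx
    obtain ⟨l, hl⟩ := exists_sub_smul_pow_three_eq_zero hI4 hann ht hx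
    have hm : x - l • t ∈ I := sub_mem hx (Submodule.smul_of_tower_mem I l ht)
    have hm2 := hcube _ hm hl
    have hnm := mul_eq_zero_of_sq_eq_zero (isUnit_two_of_charZero K) hcube hn hm hn2 hm2
    have htm := sq_mul_eq_zero_of_sq_eq_zero hI4 hann hcube ht hm hm2
    simp only [Algebra.smul_def] at hnm htm ⊢
    exact ⟨l, by linear_combination hnm, by linear_combination htm⟩
  -- `n * t`, and then `n - δ • t ^ 2`, annihilate `I`, so both are multiples of `t ^ 3`.
  obtain ⟨δ, hδ⟩ := mem_span_singleton.mp <| hann (n * t) fun x hx => by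
    obtain ⟨l, hnx, -⟩ := hmul x hx
    rw [Algebra.smul_def] at hnx
    linear_combination t * hnx + algebraMap K A l * htn
  obtain ⟨ε, hε⟩ := mem_span_singleton.mp <| hann (n - δ • t ^ 2) fun x hx => by
    obtain ⟨l, hnx, htx⟩ := hmul x hx
    rw [sub_mul, hnx, smul_mul_assoc, htx, ← hδ, smul_comm, sub_self]
  exact mem_span_pair.mpr ⟨δ, ε, by rw [hε]; abel⟩

theorem mem_span_self_sq_cube_of_mem [IsAlgClosed K] [CharZero K] (hI4 : I ^ 4 = ⊥)
    (hann : ∀ a, (∀ x ∈ I, a * x = 0) → a ∈ K ∙ t ^ 3)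
    (hcube : ∀ m ∈ I, m ^ 3 = 0 → m ^ 2 = 0) (ht : t ∈ I) {y : A} (hy : y ∈ I) :
    y ∈ span K {t, t ^ 2, t ^ 3} := by
  obtain ⟨l, hl⟩ := exists_sub_smul_pow_three_eq_zero hI4 hann ht hy
  have hm : y - l • t ∈ I := sub_mem hy (Submodule.smul_of_tower_mem I l ht)
  exact mem_span_insert.mpr
    ⟨l, y - l • t, mem_span_sq_cube_of_sq_eq_zero hI4 hann hcube ht hm (hcube _ hm hl), by abel⟩

theorem exists_mem_sq_mem_of_mem_sup [CharZero K] {U : Submodule K A} (ht4 : t ^ 4 = 0)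
    (ht : t ∈ U ⊔ K ∙ t ^ 3) (ht2 : t ^ 2 ∈ U ⊔ K ∙ t ^ 3) :
    ∃ s ∈ U, s ^ 2 ∈ U ∧ s ^ 3 = t ^ 3 := by
  obtain ⟨u, hu, _, ha, hua⟩ := mem_sup.mp ht
  obtain ⟨a, rfl⟩ := mem_span_singleton.mp ha
  obtain ⟨v, hv, _, hb, hvb⟩ := mem_sup.mp ht2
  obtain ⟨b, rfl⟩ := mem_span_singleton.mp hb
  rw [Algebra.smul_def] at hua hvb
  obtain rfl := eq_sub_of_add_eq hua
  obtain rfl := eq_sub_of_add_eq hvb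
  -- `s = u + c v` has `s ^ 2 = t ^ 2 + 2 c t ^ 3 = v` modulo `t ^ 4`.
  obtain ⟨c, hc⟩ : ∃ c : K, 2 * c + b = 0 := ⟨-b / 2, by ring⟩
  have hcv : algebraMap K A c * (t ^ 2 - algebraMap K A b * t ^ 3) ∈ U := by
    simpa [Algebra.smul_def] using U.smul_mem c hv
  replace hc := congrArg (algebraMap K A) hc
  rw [map_add, map_mul, map_ofNat, map_zero] at hc
  set α := algebraMap K A a
  set β := algebraMap K A b
  set γ := algebraMap K A c
  refine ⟨_, add_mem hu hcv, ?_, ?_⟩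
  · convert hv using 1
    linear_combination t ^ 3 * hc + ((γ - (α + γ * β) * t) ^ 2 - 2 * (α + γ * β)) * ht4
  · linear_combination (3 * (γ - (α + γ * β) * t) + 3 * t * (γ - (α + γ * β) * t) ^ 2
      + t ^ 2 * (γ - (α + γ * β) * t) ^ 3) * ht4

end EmbeddingDimensionOne

theorem maximalIdeal_pow_eq_bot_of_inf_socle_eq_bot {K A : Type*} [Field K] [CommRing A]
    [Algebra K A] [IsLocalRing A] [IsArtinianRing A] {U : Submodule K A}
    (hinf : U ⊓ (socle A).restrictScalars K = ⊥) {d : ℕ}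
    (hdeg : ∀ e : ℕ, d < e → ((maximalIdeal A ^ e : Ideal A) : Set A) ⊆ U) :
    maximalIdeal A ^ (d + 1) = ⊥ := by
  have step : ∀ e, d < e → maximalIdeal A ^ (e + 1) = ⊥ → maximalIdeal A ^ e = ⊥ := by
    refine fun e he h => eq_bot_iff.mpr fun x hx => ?_
    have hxs : x ∈ socle A := fun m hm => by
      simpa [← pow_succ, h] using Ideal.mul_mem_mul hx hm
    exact (Submodule.eq_bot_iff _).mp hinf x ⟨hdeg e he hx, hxs⟩
  obtain ⟨n, hn⟩ : IsNilpotent (maximalIdeal A) := by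
    rw [← jacobson_eq_maximalIdeal ⊥ bot_ne_top]
    exact IsArtinianRing.isNilpotent_jacobson_bot
  suffices ∀ k, maximalIdeal A ^ (d + 1 + k) = ⊥ → maximalIdeal A ^ (d + 1) = ⊥ from
    this n (le_bot_iff.mp ((Ideal.pow_le_pow_right (by omega)).trans_eq hn))
  intro k
  induction k with
  | zero => exact id
  | succ k ih => exact fun h => ih (step _ (by omega) h)

/-- Let `(A, U)` be a nondegenerate H-pair of degree `d = 3` satisfying the OP-condition.
Then there is a `ℂ`-algebra isomorphism from `A` to `ℂ[x]/(x⁴)` carrying `U` onto the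
`ℂ`-linear span of the images of `x` and `x²`. -/
theorem hpair_deg_three_of_op_condition
    (A : Type*) [CommRing A] [Algebra ℂ A] [FiniteDimensional ℂ A] [IsLocalRing A]
    -- `(A, U)` is an H-pair:
    (U : Submodule ℂ A)
    (hUm : U ≤ (IsLocalRing.maximalIdeal A).restrictScalars ℂ)
    (hgen : Algebra.adjoin ℂ (U : Set A) = ⊤)
    -- of degree `3`:
    (hdeg₁ : ¬ ((IsLocalRing.maximalIdeal A ^ 3 : Ideal A) : Set A) ⊆ (U : Set A))
    (hdeg₂ : ∀ e : ℕ, 3 < e →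
      ((IsLocalRing.maximalIdeal A ^ e : Ideal A) : Set A) ⊆ (U : Set A))
    -- nondegenerate: `dim_ℂ Soc(A) = 1` and `𝔪 = U ⊕ Soc(A)`:
    (hsoc : Module.finrank ℂ (socle A) = 1)
    (hsup : U ⊔ (socle A).restrictScalars ℂ = (IsLocalRing.maximalIdeal A).restrictScalars ℂ)
    (hinf : U ⊓ (socle A).restrictScalars ℂ = ⊥)
    -- the OP-condition (algebraic form):
    (hOP : ∀ m ∈ IsLocalRing.maximalIdeal A, m ^ 3 = 0 →
      ∃ c : Aˣ, ∃ u ∈ U, ∃ k : ℕ, 1 ≤ k ∧ u ^ (k + 1) = 0 ∧ m = (c : A) * u ^ k) :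
    ∃ e : A ≃ₐ[ℂ] (ℂ[X] ⧸ Ideal.span {(X : ℂ[X]) ^ 4}),
      Submodule.map e.toLinearMap U =
        Submodule.span ℂ {Ideal.Quotient.mk (Ideal.span {(X : ℂ[X]) ^ 4}) X,
          Ideal.Quotient.mk (Ideal.span {(X : ℂ[X]) ^ 4}) (X ^ 2)} := by
  have hcube : ∀ m ∈ maximalIdeal A, m ^ 3 = 0 → m ^ 2 = 0 := by
    intro m hm hm3
    obtain ⟨c, u, -, k, hk, hu, rfl⟩ := hOP m hm hm3
    rw [mul_pow, ← pow_mul, pow_eq_zero_of_le (by omega) hu, mul_zero]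
  have : IsArtinianRing A := isArtinian_of_tower ℂ inferInstance
  have hM4 : maximalIdeal A ^ 4 = ⊥ := maximalIdeal_pow_eq_bot_of_inf_socle_eq_bot hinf hdeg₂
  have hpow4 : ∀ x ∈ maximalIdeal A, x ^ 4 = 0 := fun x hx => by
    simpa [pow_succ] using mul_mul_mul_eq_zero_of_pow_four_eq_bot hM4 hx hx hx hx
  obtain ⟨t, htm, ht3⟩ := exists_pow_three_ne_zero (isUnit_two_of_charZero ℂ) hcube
    fun h => hdeg₁ (by simp [h])
  have hsocle : (socle A).restrictScalars ℂ = ℂ ∙ t ^ 3 := by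
    refine eq_span_singleton_of_finrank_eq_one hsoc (fun m hm => ?_) ht3
    simpa [pow_succ] using mul_mul_mul_eq_zero_of_pow_four_eq_bot hM4 htm htm htm hm
  have hmem : ∀ x ∈ maximalIdeal A, x ∈ U ⊔ ℂ ∙ t ^ 3 := fun x hx => by
    rwa [← hsocle, hsup]
  obtain ⟨s, hsU, hs2U, hs3⟩ := exists_mem_sq_mem_of_mem_sup (hpow4 t htm) (hmem t htm)
    (hmem _ (Ideal.pow_mem_of_mem _ htm 2 two_pos))
  rw [← hs3] at hsocle
  have hspan : U = span ℂ {s, s ^ 2} :=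
    eq_span_pair_of_le_span_triple hsU hs2U (fun u hu => mem_span_self_sq_cube_of_mem hM4
      (fun a ha => hsocle ▸ ha) hcube (hUm hsU) (hUm hu)) (hsocle ▸ hinf)
  obtain ⟨e, he⟩ := exists_algEquiv_quotient_span_X_pow (n := 3) (hpow4 s (hUm hsU))
    (hs3 ▸ ht3) (aeval_surjective_of_adjoin_span_eq_top (hspan ▸ hgen))
  refine ⟨e, ?_⟩
  rw [hspan, Submodule.map_span, Set.image_pair]
  simp [he]
end

section
/- Let (A, U) be an H-pair of degree d ≥ 2, and suppose that for every m ∈ 𝔪 with m^d ∈ U there exist u, u' ∈ U, an integer k ≥ 1, and λ ∈ ℂ∖{0} such that u^{k+1} = 0 and u^k = λ·exp(u')·m. Let W = U ∩ Soc(A). Then W is an ideal of A, and, denoting by π : A → A/W the quotient map, for every m ∈ 𝔪 such that π(m)^d lies in π(U), there exist u, u' ∈ U, an integer k ≥ 1, and λ ∈ ℂ∖{0} such that π(u)^{k+1} = 0 and π(u)^k = λ·π(exp(u'))·π(m). -/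
/-- The residue map as a `ℂ`-algebra homomorphism. -/
def residueAlgHom (A : Type*) [CommRing A] [Algebra ℂ A] [IsLocalRing A] :
    A →ₐ[ℂ] IsLocalRing.ResidueField A :=
  { toRingHom := IsLocalRing.residue A, commutes' := fun _ => rfl }

/-- `U ∩ Soc(A)` as an ideal, given closure under scalar multiplication. -/
def interIdeal (A : Type*) [CommRing A] [Algebra ℂ A] [IsLocalRing A]
    (U : Submodule ℂ A)
    (hsmul : ∀ (r a : A), a ∈ ((U ⊓ (socle A).restrictScalars ℂ : Submodule ℂ A) : Set A) →
      r • a ∈ ((U ⊓ (socle A).restrictScalars ℂ : Submodule ℂ A) : Set A)) : Ideal A where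
  carrier := ((U ⊓ (socle A).restrictScalars ℂ : Submodule ℂ A) : Set A)
  add_mem' := fun ha hb => add_mem ha hb
  zero_mem' := zero_mem _
  smul_mem' := fun c {x} hx => hsmul c x hx

/-- Let `(A, U)` be an H-pair of degree `d ≥ 2` satisfying the OP-condition, and let
`W = U ∩ Soc(A)`.  Then `W` is an ideal of `A` and the quotient H-pair `(A/W, U/W)`
again satisfies the OP-condition. -/
theorem op_condition_descends_to_quotient
    (A : Type*) [CommRing A] [Algebra ℂ A] [FiniteDimensional ℂ A] [IsLocalRing A]
    -- `(A, U)` is an H-pair: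
    (U : Submodule ℂ A)
    (hUm : U ≤ (IsLocalRing.maximalIdeal A).restrictScalars ℂ)
    (hgen : Algebra.adjoin ℂ (U : Set A) = ⊤)
    -- of degree `d ≥ 2`:
    (d : ℕ) (hd : 2 ≤ d)
    (hdeg₁ : ¬ ((IsLocalRing.maximalIdeal A ^ d : Ideal A) : Set A) ⊆ (U : Set A))
    (hdeg₂ : ∀ e : ℕ, d < e →
      ((IsLocalRing.maximalIdeal A ^ e : Ideal A) : Set A) ⊆ (U : Set A))
    -- the OP-condition:
    (hOP : ∀ m ∈ IsLocalRing.maximalIdeal A, m ^ d ∈ U →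
      ∃ u ∈ U, ∃ u' ∈ U, ∃ k : ℕ, 1 ≤ k ∧ ∃ l : ℂ, l ≠ 0 ∧
        u ^ (k + 1) = 0 ∧ u ^ k = l • (nilExp u' * m)) :
    -- `W = U ∩ Soc(A)` is an ideal of `A`, and the OP-condition holds modulo `W`:
    ∃ I : Ideal A,
      (I : Set A) = ((U ⊓ (socle A).restrictScalars ℂ : Submodule ℂ A) : Set A) ∧
      ∀ m ∈ IsLocalRing.maximalIdeal A,
        (Ideal.Quotient.mk I m) ^ d ∈ Submodule.map (Ideal.Quotient.mkₐ ℂ I).toLinearMap U →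
        ∃ u ∈ U, ∃ u' ∈ U, ∃ k : ℕ, 1 ≤ k ∧ ∃ l : ℂ, l ≠ 0 ∧
          (Ideal.Quotient.mk I u) ^ (k + 1) = 0 ∧
          (Ideal.Quotient.mk I u) ^ k =
            l • (Ideal.Quotient.mk I (nilExp u') * Ideal.Quotient.mk I m) := by
  have hintA : Algebra.IsIntegral ℂ A := Algebra.IsIntegral.of_finite _ _
  have hint : Algebra.IsIntegral ℂ (IsLocalRing.ResidueField A) := by
    constructor
    intro x
    obtain ⟨a, rfl⟩ := IsLocalRing.residue_surjective (R := A) x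
    exact (Algebra.IsIntegral.isIntegral (R := ℂ) a).map (residueAlgHom A)
  have hsurj : Function.Surjective (algebraMap ℂ (IsLocalRing.ResidueField A)) :=
    IsAlgClosed.algebraMap_bijective_of_isIntegral.2
  have hsmul : ∀ (r a : A), a ∈ ((U ⊓ (socle A).restrictScalars ℂ : Submodule ℂ A) : Set A) →
      r • a ∈ ((U ⊓ (socle A).restrictScalars ℂ : Submodule ℂ A) : Set A) := by
    intro r a ha
    obtain ⟨haU, haS⟩ := ha
    obtain ⟨c, hc⟩ := hsurj (IsLocalRing.residue A r)
    have hmem : r - algebraMap ℂ A c ∈ IsLocalRing.maximalIdeal A := by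
      have h2 : IsLocalRing.residue A (algebraMap ℂ A c)
          = algebraMap ℂ (IsLocalRing.ResidueField A) c := rfl
      have h1 : IsLocalRing.residue A (r - algebraMap ℂ A c) = 0 := by
        rw [map_sub, ← hc, h2, sub_self]
      exact Ideal.Quotient.eq_zero_iff_mem.mp h1
    have key : r • a = c • a := by
      have h0 : a * (r - algebraMap ℂ A c) = 0 := haS _ hmem
      rw [mul_sub, sub_eq_zero] at h0
      rw [smul_eq_mul, mul_comm r a, h0, mul_comm, Algebra.smul_def]
    refine ⟨?_, ?_⟩
    · show r • a ∈ U
      rw [key]; exact U.smul_mem c haU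
    · show r • a ∈ socle A
      exact Ideal.mul_mem_left _ r haS
  refine ⟨interIdeal A U hsmul, rfl, ?_⟩
  intro m hm hmd
  obtain ⟨u₀, hu₀U, hu₀⟩ := hmd
  have hmdU : m ^ d ∈ U := by
    have hIU : (m ^ d - u₀) ∈ interIdeal A U hsmul := by
      rw [← Ideal.Quotient.eq_zero_iff_mem, map_sub, sub_eq_zero, map_pow]
      have := hu₀
      rw [AlgHom.toLinearMap_apply, Ideal.Quotient.mkₐ_eq_mk] at this
      exact this.symm
    have h3 : m ^ d - u₀ ∈ (U ⊓ (socle A).restrictScalars ℂ : Submodule ℂ A) := hIU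
    simpa using add_mem h3.1 hu₀U
  obtain ⟨u, huU, u', hu'U, k, hk, l, hl, h1, h2⟩ := hOP m hm hmdU
  refine ⟨u, huU, u', hu'U, k, hk, l, hl, ?_, ?_⟩
  · rw [← map_pow, h1, map_zero]
  · rw [← map_pow, h2, ← Ideal.Quotient.mkₐ_eq_mk ℂ _, map_smul, map_mul]
end

section
/- For (s₁, s₂) ∈ ℂ², define the linear map ψ_{(s₁,s₂)} : ℂ⁴ → ℂ⁴ (coordinates z₀, z₁, z₂, z₃) by ψ(z)₀ = z₀, ψ(z)₁ = z₁ + s₁z₀, ψ(z)₂ = z₂ + s₁z₁ + (s₂ + s₁²/2)z₀, ψ(z)₃ = z₃ + s₁z₂ + (s₂ + s₁²/2)z₁ + (s₁s₂ + s₁³/6)z₀. Then (i) ψ_{(0,0)} is the identity and ψ_s ∘ ψ_t = ψ_{s+t} for all s, t ∈ ℂ² (so this is an action of the additive group ℂ² by linear automorphisms), and (ii) the cubic form F(z) = z₀²z₃ − z₀z₁z₂ + z₁³/3 satisfies F(ψ_s z) = F(z) for all s ∈ ℂ² and z ∈ ℂ⁴, so the action preserves the cubic cone {F = 0}. -/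
/-- The map `ψ_{(s₁,s₂)}` on `ℂ⁴` (coordinates `z₀, z₁, z₂, z₃`):
`ψ(z)₀ = z₀`, `ψ(z)₁ = z₁ + s₁z₀`, `ψ(z)₂ = z₂ + s₁z₁ + (s₂ + s₁²/2)z₀`,
`ψ(z)₃ = z₃ + s₁z₂ + (s₂ + s₁²/2)z₁ + (s₁s₂ + s₁³/6)z₀`. -/
noncomputable def cubicAction (s : ℂ × ℂ) : ℂ × ℂ × ℂ × ℂ → ℂ × ℂ × ℂ × ℂ :=
  fun z =>
    (z.1,
     z.2.1 + s.1 * z.1,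
     z.2.2.1 + s.1 * z.2.1 + (s.2 + s.1 ^ 2 / 2) * z.1,
     z.2.2.2 + s.1 * z.2.2.1 + (s.2 + s.1 ^ 2 / 2) * z.2.1 +
       (s.1 * s.2 + s.1 ^ 3 / 6) * z.1)

/-- The cubic form `F(z) = z₀²z₃ − z₀z₁z₂ + z₁³/3`. -/
noncomputable def cubicForm : ℂ × ℂ × ℂ × ℂ → ℂ :=
  fun z => z.1 ^ 2 * z.2.2.2 - z.1 * z.2.1 * z.2.2.1 + z.2.1 ^ 3 / 3

/-- `s ↦ ψ_s` is an action of the additive group `ℂ²` by linear automorphisms of `ℂ⁴`,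
and it preserves the cubic form `F(z) = z₀²z₃ − z₀z₁z₂ + z₁³/3`, hence the cubic cone
`{F = 0}`. -/
theorem cubicAction_is_action_and_preserves_form :
    (∀ s : ℂ × ℂ, IsLinearMap ℂ (cubicAction s)) ∧
    cubicAction 0 = id ∧
    (∀ s t : ℂ × ℂ, cubicAction s ∘ cubicAction t = cubicAction (s + t)) ∧
    (∀ (s : ℂ × ℂ) (z : ℂ × ℂ × ℂ × ℂ), cubicForm (cubicAction s z) = cubicForm z) := by
  refine ⟨fun s => ⟨fun x y => ?_, fun c x => ?_⟩, ?_, fun s t => ?_, fun s z => ?_⟩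
  · simp only [cubicAction, Prod.mk_add_mk, Prod.fst_add, Prod.snd_add, Prod.mk.injEq]
    refine ⟨trivial, ?_, ?_, ?_⟩ <;> ring
  · simp only [cubicAction, Prod.smul_mk, Prod.smul_fst, Prod.smul_snd, smul_eq_mul,
      Prod.mk.injEq]
    refine ⟨trivial, ?_, ?_, ?_⟩ <;> ring
  · funext z
    simp only [cubicAction, Prod.fst_zero, Prod.snd_zero, id_eq]
    norm_num
  · funext z
    simp only [cubicAction, Function.comp_apply, Prod.fst_add, Prod.snd_add, Prod.mk.injEq]
    refine ⟨trivial, ?_, ?_, ?_⟩ <;> ring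
  · simp only [cubicAction, cubicForm]
    ring
end

section
/- Let (s₁, s₂) ∈ ℂ² be nonzero. For t ∈ ℝ let w(t) = (1, t s₁, t² s₁²/2, t s₂ + t³ s₁³/6) ∈ ℂ⁴. Then in the projectivization ℙ(ℂ⁴), the point [w(t)] tends to [0 : 0 : 0 : 1] as t → +∞. (This shows that for the additive action (s₁,s₂)∘[z₀:z₁:z₂:z₃] = [z₀ : z₁+s₁z₀ : z₂+s₁z₁+ (s₁²/2)z₀ : z₃+s₁z₂+(s₁²/2)z₁+(s₂+s₁³/6)z₀] on the quadric {2z₀z₂ = z₁²} ⊆ ℙ³, the limit lim_{t→∞} tv∘x₀ with x₀ = [1:0:0:0] equals [0:0:0:1] for every nonzero v ∈ ℂ², so this additive action does not satisfy the OP-condition.) -/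
open Filter

/-!
Rescale `w(t)` by a scalar so that it converges in `ℂ⁴` to a nonzero multiple of `e₃`; the
projective class is unchanged and `mk` is continuous on nonzero vectors. In the variable
`u = t⁻¹` the rescaled curve is polynomial: `6 u³ / s₁³ • w(t)` if `s₁ ≠ 0`, and
`u / s₂ • w(t)` if `s₁ = 0`, both equal to `e₃` at `u = 0`.
-/

open Topology

namespace Projectivization

variable {K V α : Type*} [DivisionRing K] [AddCommGroup V] [Module K V] [TopologicalSpace V]
  {l : Filter α} {w : α → V} {v : V}

theorem tendsto_mk (hw : ∀ a, w a ≠ 0) (hv : v ≠ 0) (h : Tendsto w l (𝓝 v)) :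
    Tendsto (fun a => mk K (w a) (hw a)) l (𝓝 (mk K v hv)) :=
  (continuous_quotient_mk'.tendsto (⟨v, hv⟩ : {v : V // v ≠ 0})).comp
    (tendsto_subtype_rng.mpr h)

theorem tendsto_mk_of_tendsto_smul [T1Space V] (hw : ∀ a, w a ≠ 0) (hv : v ≠ 0) {c : α → K}
    (h : Tendsto (fun a => c a • w a) l (𝓝 v)) :
    Tendsto (fun a => mk K (w a) (hw a)) l (𝓝 (mk K v hv)) := by
  classical
  -- `c a • w a` may vanish off a set in `l`; there it is replaced by `w a` itself.
  set u : α → V := fun a => if c a • w a = 0 then w a else c a • w a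
  have hu : ∀ a, u a ≠ 0 := fun a => by
    simp only [u]
    split_ifs with hca
    exacts [hw a, hca]
  have hmk : ∀ a, mk K (w a) (hw a) = mk K (u a) (hu a) := fun a => by
    by_cases hca : c a • w a = 0
    · simp only [u, hca, if_true]
    · simp only [u, hca, if_false]
      exact ((mk_eq_mk_iff' K _ _ _ _).mpr ⟨c a, rfl⟩).symm
  have hu_eq : (fun a => c a • w a) =ᶠ[l] u :=
    (h.eventually_ne hv).mono fun a ha => (if_neg ha).symm
  simpa only [hmk] using tendsto_mk hu hv (h.congr' hu_eq)

end Projectivization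

theorem tendsto_atTop_of_eq_comp_ofReal_inv {V : Type*} [TopologicalSpace V] {F : ℂ → V}
    {G : ℝ → V} (hF : Continuous F) (hG : ∀ t : ℝ, t ≠ 0 → G t = F (t : ℂ)⁻¹) :
    Tendsto G atTop (𝓝 (F 0)) := by
  have hinv : Tendsto (fun t : ℝ => (t : ℂ)⁻¹) atTop (𝓝 0) := by
    simpa only [Function.comp_def, Complex.ofReal_inv, Complex.ofReal_zero] using
      (Complex.continuous_ofReal.tendsto 0).comp tendsto_inv_atTop_zero
  refine ((hF.tendsto 0).comp hinv).congr' ?_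
  filter_upwards [eventually_ne_atTop 0] with t ht
  exact (hG t ht).symm

/-- Let `(s₁, s₂) ∈ ℂ²` be nonzero and, for `t ∈ ℝ`, let
`w(t) = (1, t s₁, t² s₁²/2, t s₂ + t³ s₁³/6) ∈ ℂ⁴`.  Then in `ℙ(ℂ⁴)`, the point `[w(t)]`
tends to `[0 : 0 : 0 : 1]` as `t → +∞`.  (Hence for the corresponding additive action on
the quadric `{2z₀z₂ = z₁²} ⊆ ℙ³`, every one-parameter limit from the base point
`[1:0:0:0]` equals `[0:0:0:1]`, so this additive action does not satisfy the
OP-condition.) -/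
theorem tendsto_degenerate_quadric_one_param_to_fixed_point
    (s : ℂ × ℂ) (hs : s ≠ 0) :
    Tendsto
      (fun t : ℝ => Projectivization.mk ℂ
        (((1 : ℂ), (t : ℂ) * s.1, (t : ℂ) ^ 2 * s.1 ^ 2 / 2,
          (t : ℂ) * s.2 + (t : ℂ) ^ 3 * s.1 ^ 3 / 6) : ℂ × ℂ × ℂ × ℂ)
        (by simp [Prod.ext_iff]))
      atTop
      (nhds (Projectivization.mk ℂ (((0 : ℂ), (0 : ℂ), (0 : ℂ), (1 : ℂ)) : ℂ × ℂ × ℂ × ℂ)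
        (by simp [Prod.ext_iff]))) := by
  by_cases h₁ : s.1 = 0
  · have h₂ : s.2 ≠ 0 := fun h₂ => hs (Prod.ext h₁ h₂)
    have hF : Continuous fun u : ℂ => (u / s.2, (0 : ℂ), (0 : ℂ), (1 : ℂ)) := by fun_prop
    refine Projectivization.tendsto_mk_of_tendsto_smul
      (c := fun t : ℝ => (t : ℂ)⁻¹ / s.2) _ _ ?_
    convert tendsto_atTop_of_eq_comp_ofReal_inv hF fun t ht₀ => ?_ using 2
    · simp
    · have ht : (t : ℂ) ≠ 0 := by exact_mod_cast ht₀
      simp only [Prod.smul_mk, smul_eq_mul, h₁, Prod.mk.injEq]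
      refine ⟨by ring, by ring, by ring, by field_simp; ring⟩
  · have hF : Continuous fun u : ℂ =>
        (6 / s.1 ^ 3 * u ^ 3, 6 / s.1 ^ 2 * u ^ 2, 3 / s.1 * u, 6 * s.2 / s.1 ^ 3 * u ^ 2 + 1) := by
      fun_prop
    refine Projectivization.tendsto_mk_of_tendsto_smul
      (c := fun t : ℝ => 6 * (t : ℂ)⁻¹ ^ 3 / s.1 ^ 3) _ _ ?_
    convert tendsto_atTop_of_eq_comp_ofReal_inv hF fun t ht₀ => ?_ using 2
    · simp
    · have ht : (t : ℂ) ≠ 0 := by exact_mod_cast ht₀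
      simp only [Prod.smul_mk, smul_eq_mul, Prod.mk.injEq]
      refine ⟨by field_simp, by field_simp, by field_simp; ring, by field_simp⟩
end
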